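/- Let 0<q<1 and t>0. Let b_n:[0,∞)→ℝ, n≥0, be functions, each bounded on [0,t], such that ∑_{n=0}^∞ (1/[n]_q!)·∫_0^t b_n(s)²·s^n d_q s < ∞ (the inner integrals being Jackson q-integrals). Under the q-Brownian hypotheses on (B_s), the random variables S_N := ∑_{m=0}^N (1/[m+1]_q!)·∑_{k=0}^∞ b_m(q^k t)·(h_{m+1}(B_{q^k t}; q^k t) − h_{m+1}(B_{q^{k+1} t}; q^{k+1} t)) are well defined (the inner series converge a.s. and in L²(P)) and the sequence (S_N)_{N≥0} converges in L²(P) as N→∞. -/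

import Mathlib

/-!
Since `|B_s| ≤ 2√s/√(1-q)`, the recurrence gives `|h_n(B_s;s)| ≤ c_n s^{n/2}`, so the `k`-th term
of the inner series for `J_m` is a.s. bounded by a constant times `q^{k/2}`: the inner series
converge a.s. and, being uniformly dominated, in `L²`. The martingale property upgrades the
orthogonality of the `h_n(B_s;s)` at equal times to
`E[h_n(B_u;u) h_m(B_s;s)] = δ_{mn} [n]_q! min(s,u)^n`, which makes all the increments pairwise
orthogonal. So the `J_m` are orthogonal in `L²` and `‖J_m / [m+1]_q!‖²` is exactly the `m`-th term
of the given convergent series; an orthogonal series with summable squared norms converges in the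
Hilbert space `L²`.
-/

open MeasureTheory Filter

/-- `[n]_q = 1 + q + ⋯ + q^{n-1}`. -/
noncomputable def qNat (q : ℝ) (n : ℕ) : ℝ := ∑ i ∈ Finset.range n, q ^ i

/-- `[n]_q! = [1]_q [2]_q ⋯ [n]_q`. -/
noncomputable def qFact (q : ℝ) (n : ℕ) : ℝ := ∏ i ∈ Finset.range n, qNat q (i + 1)

/-- Monic continuous q-Hermite polynomials: `h_0 = 1`, `h_1 = x`,
`x·h_n(x;t) = h_{n+1}(x;t) + t·[n]_q·h_{n−1}(x;t)`. -/
noncomputable def qH (q : ℝ) : ℕ → ℝ → ℝ → ℝ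
  | 0, _, _ => 1
  | 1, x, _ => x
  | (n + 2), x, t => x * qH q (n + 1) x t - t * qNat q (n + 1) * qH q n x t

open scoped Topology InnerProductSpace ENNReal

/-- The recurrence of `qH`, estimated with `|x| ≤ 2√s/√(1-q)` and `[n]_q ≤ 1/(1-q)`. -/
noncomputable def qHBound (q : ℝ) : ℕ → ℝ
  | 0 => 1
  | 1 => 2 / Real.sqrt (1 - q)
  | (n + 2) => 2 / Real.sqrt (1 - q) * qHBound q (n + 1) + qHBound q n / (1 - q)

section QHermite

variable {q : ℝ}

theorem one_sub_mul_qNat (q : ℝ) (n : ℕ) : (1 - q) * qNat q n = 1 - q ^ n :=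
  mul_neg_geom_sum q n

theorem qNat_nonneg (hq : 0 ≤ q) (n : ℕ) : 0 ≤ qNat q n :=
  Finset.sum_nonneg fun i _ => pow_nonneg hq i

theorem qNat_le_inv_one_sub (hq0 : 0 ≤ q) (hq1 : q < 1) (n : ℕ) : qNat q n ≤ 1 / (1 - q) := by
  have h : (1 - q) * qNat q n ≤ 1 := by
    rw [one_sub_mul_qNat]; linarith [pow_nonneg hq0 n]
  rw [le_div_iff₀ (sub_pos.2 hq1)]; linarith

theorem qNat_succ_pos (hq : 0 ≤ q) (n : ℕ) : 0 < qNat q (n + 1) := by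
  rw [qNat, Finset.sum_range_succ', pow_zero]
  positivity

theorem qFact_pos (hq : 0 ≤ q) (n : ℕ) : 0 < qFact q n :=
  Finset.prod_pos fun i _ => qNat_succ_pos hq i

theorem qFact_succ (q : ℝ) (n : ℕ) : qFact q (n + 1) = qFact q n * qNat q (n + 1) :=
  Finset.prod_range_succ _ n

theorem qHBound_pos (hq1 : q < 1) (n : ℕ) : 0 < qHBound q n := by
  have : 0 < 1 - q := sub_pos.2 hq1
  induction n using Nat.twoStepInduction with
  | zero => exact one_pos
  | one => simp only [qHBound]; positivity
  | more n ih0 ih1 => simp only [qHBound]; positivity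

theorem continuous_qH (q : ℝ) (n : ℕ) (s : ℝ) : Continuous fun x => qH q n x s := by
  induction n using Nat.twoStepInduction with
  | zero => exact continuous_const
  | one => exact continuous_id
  | more n ih0 ih1 => exact (continuous_id.mul ih1).sub (continuous_const.mul ih0)

theorem abs_qH_le (hq0 : 0 ≤ q) (hq1 : q < 1) {x s : ℝ} (hs : 0 ≤ s)
    (hx : |x| ≤ 2 * Real.sqrt s / Real.sqrt (1 - q)) (n : ℕ) :
    |qH q n x s| ≤ qHBound q n * Real.sqrt s ^ n := by
  have hx' : |x| ≤ 2 / Real.sqrt (1 - q) * Real.sqrt s := hx.trans_eq (by ring)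
  induction n using Nat.twoStepInduction with
  | zero => simp [qH, qHBound]
  | one => simpa [qH, qHBound] using hx'
  | more n ih0 ih1 =>
    have hqs : s * qNat q (n + 1) ≤ Real.sqrt s ^ 2 * (1 / (1 - q)) := by
      rw [Real.sq_sqrt hs]; exact mul_le_mul_of_nonneg_left (qNat_le_inv_one_sub hq0 hq1 _) hs
    have hc0 := (qHBound_pos hq1 n).le
    have hc1 := (qHBound_pos hq1 (n + 1)).le
    calc |qH q (n + 2) x s|
        ≤ |x| * |qH q (n + 1) x s| + s * qNat q (n + 1) * |qH q n x s| := by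
          simp only [qH]
          refine (abs_sub _ _).trans_eq ?_
          rw [abs_mul, abs_mul, abs_of_nonneg (mul_nonneg hs (qNat_nonneg hq0 _))]
      _ ≤ 2 / Real.sqrt (1 - q) * Real.sqrt s * (qHBound q (n + 1) * Real.sqrt s ^ (n + 1))
          + Real.sqrt s ^ 2 * (1 / (1 - q)) * (qHBound q n * Real.sqrt s ^ n) := by
          gcongr
      _ = qHBound q (n + 2) * Real.sqrt s ^ (n + 2) := by
          simp only [qHBound]; ring

end QHermite

theorem summable_of_pairwise_inner_eq_zero {ι E : Type*} [NormedAddCommGroup E]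
    [InnerProductSpace ℝ E] [CompleteSpace E] {v : ι → E}
    (hv : Pairwise fun i j => ⟪v i, v j⟫_ℝ = 0) (hsum : Summable fun i => ‖v i‖ ^ 2) :
    Summable v := by
  have hV : OrthogonalFamily ℝ (fun i => ℝ ∙ v i) fun i => (ℝ ∙ v i).subtypeₗᵢ :=
    orthogonalFamily_iff_pairwise.2 fun i j hij =>
      Submodule.isOrtho_span.2 fun x hx y hy => by
        rw [Set.mem_singleton_iff.1 hx, Set.mem_singleton_iff.1 hy]; exact hv hij
  exact (hV.summable_iff_norm_sq_summable fun i => ⟨v i, Submodule.mem_span_singleton_self _⟩).2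
    hsum

section L2

variable {Ω : Type*} [MeasurableSpace Ω] {μ : Measure Ω}

theorem integral_mul_eq_inner {F G : Lp ℝ 2 μ} {f g : Ω → ℝ} (hf : F =ᵐ[μ] f)
    (hg : G =ᵐ[μ] g) : ∫ ω, f ω * g ω ∂μ = ⟪F, G⟫_ℝ := by
  rw [L2.inner_def]
  refine integral_congr_ae ?_
  filter_upwards [hf, hg] with ω h1 h2
  simp [h1, h2, mul_comm]

theorem integral_sq_eq_norm_sq {F : Lp ℝ 2 μ} {f : Ω → ℝ} (hf : F =ᵐ[μ] f) :
    ∫ ω, f ω ^ 2 ∂μ = ‖F‖ ^ 2 := by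
  simp_rw [sq, integral_mul_eq_inner hf hf, real_inner_self_eq_norm_mul_norm]

theorem exists_tendsto_integral_sq_sum_sub_of_orthogonal {f : ℕ → Ω → ℝ}
    (hf : ∀ m, MemLp (f m) 2 μ) (horth : Pairwise fun m n => ∫ ω, f m ω * f n ω ∂μ = 0)
    (hsum : Summable fun m => ∫ ω, f m ω ^ 2 ∂μ) :
    ∃ S : Ω → ℝ,
      Tendsto (fun N => ∫ ω, (∑ m ∈ Finset.range N, f m ω - S ω) ^ 2 ∂μ) atTop (𝓝 0) := by
  set F : ℕ → Lp ℝ 2 μ := fun m => (hf m).toLp (f m)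
  have hF : Summable F :=
    summable_of_pairwise_inner_eq_zero
      (fun m n hmn => (integral_mul_eq_inner (hf m).coeFn_toLp (hf n).coeFn_toLp).symm.trans
        (horth hmn))
      (hsum.congr fun m => integral_sq_eq_norm_sq (hf m).coeFn_toLp)
  obtain ⟨S, hS⟩ := hF
  refine ⟨S, ?_⟩
  have hdist : ∀ N, ∫ ω, (∑ m ∈ Finset.range N, f m ω - S ω) ^ 2 ∂μ
      = dist (∑ m ∈ Finset.range N, F m) S ^ 2 := fun N => by
    rw [dist_eq_norm]
    refine integral_sq_eq_norm_sq (EventuallyEq.symm ?_)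
    filter_upwards [Lp.coeFn_sub (∑ m ∈ Finset.range N, F m) S,
      Lp.coeFn_fun_finsetSum (Finset.range N) F, ae_all_iff.2 fun m => (hf m).coeFn_toLp]
      with ω hsub hsum hF
    simp only [hsub, Pi.sub_apply, hsum, hF, F]
  simp_rw [hdist]
  simpa using (tendsto_iff_dist_tendsto_zero.1 hS.tendsto_sum_nat).pow 2

end L2

section RandomSeries

variable {Ω : Type*} [MeasurableSpace Ω] {μ : Measure Ω}

theorem tendsto_integral_sq_of_ae_abs_le [IsFiniteMeasure μ] {g : ℕ → Ω → ℝ} {ε : ℕ → ℝ}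
    (hg : ∀ N, AEStronglyMeasurable (g N) μ) (hgε : ∀ᵐ ω ∂μ, ∀ N, |g N ω| ≤ ε N)
    (hε : Tendsto ε atTop (𝓝 0)) :
    Tendsto (fun N => ∫ ω, g N ω ^ 2 ∂μ) atTop (𝓝 0) := by
  have hsq : ∀ N, ∀ᵐ ω ∂μ, g N ω ^ 2 ≤ ε N ^ 2 := fun N =>
    hgε.mono fun _ h => sq_le_sq' (abs_le.1 (h N)).1 (abs_le.1 (h N)).2
  have hle : ∀ N, ∫ ω, g N ω ^ 2 ∂μ ≤ μ.real Set.univ * ε N ^ 2 := fun N => by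
    rw [← smul_eq_mul, ← integral_const]
    refine integral_mono_ae (Integrable.of_bound ((hg N).pow 2) (ε N ^ 2) ?_)
      (integrable_const _) (hsq N)
    filter_upwards [hsq N] with ω h
    rwa [Real.norm_of_nonneg (sq_nonneg _)]
  refine tendsto_of_tendsto_of_tendsto_of_le_of_le tendsto_const_nhds ?_
    (fun _ => integral_nonneg fun _ => sq_nonneg _) hle
  simpa using (hε.pow 2).const_mul (μ.real Set.univ)

theorem tendsto_integral_mul_of_ae_tendsto [IsFiniteMeasure μ] {F G : ℕ → Ω → ℝ}
    {f g : Ω → ℝ} {C D : ℝ} (hF : ∀ N, AEStronglyMeasurable (F N) μ)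
    (hG : ∀ N, AEStronglyMeasurable (G N) μ) (hFC : ∀ᵐ ω ∂μ, ∀ N, |F N ω| ≤ C)
    (hGD : ∀ᵐ ω ∂μ, ∀ N, |G N ω| ≤ D) (hFf : ∀ᵐ ω ∂μ, Tendsto (F · ω) atTop (𝓝 (f ω)))
    (hGg : ∀ᵐ ω ∂μ, Tendsto (G · ω) atTop (𝓝 (g ω))) :
    Tendsto (fun N => ∫ ω, F N ω * G N ω ∂μ) atTop (𝓝 (∫ ω, f ω * g ω ∂μ)) := by
  refine tendsto_integral_of_dominated_convergence (fun _ => C * D)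
    (fun N => (hF N).mul (hG N)) (integrable_const _) (fun N => ?_) ?_
  · filter_upwards [hFC, hGD] with ω h1 h2
    rw [Real.norm_eq_abs, abs_mul]
    exact mul_le_mul (h1 N) (h2 N) (abs_nonneg _) ((abs_nonneg _).trans (h1 N))
  · filter_upwards [hFf, hGg] with ω h1 h2
    exact h1.mul h2

variable {f : ℕ → Ω → ℝ} {K r : ℝ}

theorem ae_hasSum_of_abs_le_geometric (hr0 : 0 ≤ r) (hr1 : r < 1)
    (hf : ∀ᵐ ω ∂μ, ∀ k, |f k ω| ≤ K * r ^ k) : ∀ᵐ ω ∂μ, HasSum (f · ω) (∑' k, f k ω) :=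
  hf.mono fun _ h =>
    (Summable.of_norm_bounded ((summable_geometric_of_lt_one hr0 hr1).mul_left K) h).hasSum

theorem ae_tendsto_sum_range_tsum_of_abs_le_geometric (hr0 : 0 ≤ r) (hr1 : r < 1)
    (hf : ∀ᵐ ω ∂μ, ∀ k, |f k ω| ≤ K * r ^ k) :
    ∀ᵐ ω ∂μ, Tendsto (fun N => ∑ k ∈ Finset.range N, f k ω) atTop (𝓝 (∑' k, f k ω)) :=
  (ae_hasSum_of_abs_le_geometric hr0 hr1 hf).mono fun _ h => h.tendsto_sum_nat

theorem ae_abs_sum_range_sub_tsum_le (hr0 : 0 ≤ r) (hr1 : r < 1)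
    (hf : ∀ᵐ ω ∂μ, ∀ k, |f k ω| ≤ K * r ^ k) :
    ∀ᵐ ω ∂μ, ∀ N, |∑ k ∈ Finset.range N, f k ω - ∑' k, f k ω| ≤ K * r ^ N / (1 - r) := by
  filter_upwards [hf, ae_hasSum_of_abs_le_geometric hr0 hr1 hf] with ω h hsum N
  exact norm_sub_le_of_geometric_bound_of_hasSum hr1 h hsum N

theorem ae_abs_sum_range_le (hr0 : 0 ≤ r) (hr1 : r < 1)
    (hf : ∀ᵐ ω ∂μ, ∀ k, |f k ω| ≤ K * r ^ k) :
    ∀ᵐ ω ∂μ, ∀ N, |∑ k ∈ Finset.range N, f k ω| ≤ K / (1 - r) := by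
  filter_upwards [hf] with ω h N
  have hK : 0 ≤ K := by simpa using (abs_nonneg _).trans (h 0)
  calc |∑ k ∈ Finset.range N, f k ω| ≤ ∑ k ∈ Finset.range N, K * r ^ k :=
        (Finset.abs_sum_le_sum_abs _ _).trans (Finset.sum_le_sum fun k _ => h k)
    _ = K * ∑ k ∈ Finset.Ico 0 N, r ^ k := by rw [Finset.mul_sum, Finset.range_eq_Ico]
    _ ≤ K * (r ^ 0 / (1 - r)) := by gcongr; exact geom_sum_Ico_le_of_lt_one hr0 hr1
    _ = K / (1 - r) := by ring

theorem ae_abs_tsum_le (hr0 : 0 ≤ r) (hr1 : r < 1) (hf : ∀ᵐ ω ∂μ, ∀ k, |f k ω| ≤ K * r ^ k) :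
    ∀ᵐ ω ∂μ, |∑' k, f k ω| ≤ K / (1 - r) := by
  filter_upwards [ae_abs_sum_range_sub_tsum_le hr0 hr1 hf] with ω h
  simpa using h 0

theorem aestronglyMeasurable_tsum_of_abs_le_geometric (hmeas : ∀ k, AEStronglyMeasurable (f k) μ)
    (hr0 : 0 ≤ r) (hr1 : r < 1) (hf : ∀ᵐ ω ∂μ, ∀ k, |f k ω| ≤ K * r ^ k) :
    AEStronglyMeasurable (fun ω => ∑' k, f k ω) μ :=
  aestronglyMeasurable_of_tendsto_ae atTop
    (fun _ => Finset.aestronglyMeasurable_fun_sum _ fun k _ => hmeas k)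
    (ae_tendsto_sum_range_tsum_of_abs_le_geometric hr0 hr1 hf)

theorem memLp_tsum_of_abs_le_geometric [IsFiniteMeasure μ]
    (hmeas : ∀ k, AEStronglyMeasurable (f k) μ) (hr0 : 0 ≤ r) (hr1 : r < 1)
    (hf : ∀ᵐ ω ∂μ, ∀ k, |f k ω| ≤ K * r ^ k) (p : ℝ≥0∞) :
    MemLp (fun ω => ∑' k, f k ω) p μ :=
  MemLp.of_bound (aestronglyMeasurable_tsum_of_abs_le_geometric hmeas hr0 hr1 hf) _
    (ae_abs_tsum_le hr0 hr1 hf)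

theorem tendsto_integral_sq_sum_range_sub_tsum [IsFiniteMeasure μ]
    (hmeas : ∀ k, AEStronglyMeasurable (f k) μ) (hr0 : 0 ≤ r) (hr1 : r < 1)
    (hf : ∀ᵐ ω ∂μ, ∀ k, |f k ω| ≤ K * r ^ k) :
    Tendsto (fun N => ∫ ω, (∑ k ∈ Finset.range N, f k ω - ∑' k, f k ω) ^ 2 ∂μ)
      atTop (𝓝 0) := by
  refine tendsto_integral_sq_of_ae_abs_le (fun N => ?_) (ae_abs_sum_range_sub_tsum_le hr0 hr1 hf) ?_
  · exact (Finset.aestronglyMeasurable_fun_sum _ fun k _ => hmeas k).sub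
      (aestronglyMeasurable_tsum_of_abs_le_geometric hmeas hr0 hr1 hf)
  · simpa using ((tendsto_pow_atTop_nhds_zero_of_lt_one hr0 hr1).const_mul K).div_const (1 - r)

theorem tendsto_integral_sum_range_mul_sum_range [IsFiniteMeasure μ] {g : ℕ → Ω → ℝ} {L : ℝ}
    (hfm : ∀ k, AEStronglyMeasurable (f k) μ) (hgm : ∀ k, AEStronglyMeasurable (g k) μ)
    (hr0 : 0 ≤ r) (hr1 : r < 1) (hf : ∀ᵐ ω ∂μ, ∀ k, |f k ω| ≤ K * r ^ k)
    (hg : ∀ᵐ ω ∂μ, ∀ k, |g k ω| ≤ L * r ^ k) :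
    Tendsto (fun N => ∫ ω, (∑ k ∈ Finset.range N, f k ω) * ∑ k ∈ Finset.range N, g k ω ∂μ)
      atTop (𝓝 (∫ ω, (∑' k, f k ω) * ∑' k, g k ω ∂μ)) :=
  tendsto_integral_mul_of_ae_tendsto
    (fun _ => Finset.aestronglyMeasurable_fun_sum _ fun k _ => hfm k)
    (fun _ => Finset.aestronglyMeasurable_fun_sum _ fun k _ => hgm k)
    (ae_abs_sum_range_le hr0 hr1 hf) (ae_abs_sum_range_le hr0 hr1 hg)
    (ae_tendsto_sum_range_tsum_of_abs_le_geometric hr0 hr1 hf)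
    (ae_tendsto_sum_range_tsum_of_abs_le_geometric hr0 hr1 hg)

end RandomSeries

theorem integral_sub_mul_sub {Ω : Type*} [MeasurableSpace Ω] {μ : Measure Ω}
    {f g h k : Ω → ℝ} (hfh : Integrable (fun ω => f ω * h ω) μ)
    (hfk : Integrable (fun ω => f ω * k ω) μ) (hgh : Integrable (fun ω => g ω * h ω) μ)
    (hgk : Integrable (fun ω => g ω * k ω) μ) :
    ∫ ω, (f ω - g ω) * (h ω - k ω) ∂μ
      = ∫ ω, f ω * h ω ∂μ - ∫ ω, f ω * k ω ∂μ - (∫ ω, g ω * h ω ∂μ - ∫ ω, g ω * k ω ∂μ) := by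
  simp_rw [sub_mul, mul_sub]
  rw [integral_sub, integral_sub hfh hfk, integral_sub hgh hgk]
  exacts [hfh.sub hfk, hgh.sub hgk]

theorem integral_mul_condExp_of_stronglyMeasurable_left {Ω : Type*} {m m0 : MeasurableSpace Ω}
    {μ : Measure Ω} [IsFiniteMeasure μ] (hm : m ≤ m0) {f g : Ω → ℝ} (hf : StronglyMeasurable[m] f)
    (hfg : Integrable (fun ω => f ω * g ω) μ) (hg : Integrable g μ) :
    ∫ ω, f ω * (μ[g | m]) ω ∂μ = ∫ ω, f ω * g ω ∂μ := by
  rw [← integral_condExp hm (f := fun ω => f ω * g ω)]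
  exact integral_congr_ae (condExp_mul_of_stronglyMeasurable_left hf hfg hg).symm

structure IsQBrownian {Ω : Type*} [m0 : MeasurableSpace Ω] (μ : Measure Ω)
    (ℱ : Filtration ℝ m0) (q : ℝ) (B : ℝ → Ω → ℝ) : Prop where
  adapted : Adapted ℱ B
  abs_le : ∀ s : ℝ, 0 ≤ s → ∀ᵐ ω ∂μ, |B s ω| ≤ 2 * Real.sqrt s / Real.sqrt (1 - q)
  condExp_qH : ∀ (n : ℕ) (s u : ℝ), 0 ≤ s → s ≤ u →
    μ[fun ω => qH q n (B u ω) u | ℱ s] =ᵐ[μ] fun ω => qH q n (B s ω) s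
  integral_qH_mul_qH : ∀ s : ℝ, 0 < s → ∀ m n : ℕ,
    ∫ ω, qH q n (B s ω) s * qH q m (B s ω) s ∂μ = if m = n then qFact q n * s ^ n else 0

namespace IsQBrownian

variable {Ω : Type*} [m0 : MeasurableSpace Ω] {μ : Measure Ω} {ℱ : Filtration ℝ m0} {q : ℝ}
  {B : ℝ → Ω → ℝ}

theorem stronglyMeasurable_qH (hB : IsQBrownian μ ℱ q B) (n : ℕ) (s : ℝ) :
    StronglyMeasurable[ℱ s] fun ω => qH q n (B s ω) s :=
  (continuous_qH q n s).comp_stronglyMeasurable (hB.adapted s).stronglyMeasurable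

theorem aestronglyMeasurable_qH (hB : IsQBrownian μ ℱ q B) (n : ℕ) (s : ℝ) :
    AEStronglyMeasurable (fun ω => qH q n (B s ω) s) μ :=
  ((hB.stronglyMeasurable_qH n s).mono (ℱ.le s)).aestronglyMeasurable

theorem ae_abs_qH_le (hB : IsQBrownian μ ℱ q B) (hq0 : 0 ≤ q) (hq1 : q < 1) {s : ℝ}
    (hs : 0 ≤ s) (n : ℕ) : ∀ᵐ ω ∂μ, |qH q n (B s ω) s| ≤ qHBound q n * Real.sqrt s ^ n :=
  (hB.abs_le s hs).mono fun _ hx => abs_qH_le hq0 hq1 hs hx n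

variable [IsFiniteMeasure μ]

theorem integrable_qH (hB : IsQBrownian μ ℱ q B) (hq0 : 0 ≤ q) (hq1 : q < 1) {s : ℝ}
    (hs : 0 ≤ s) (n : ℕ) : Integrable (fun ω => qH q n (B s ω) s) μ :=
  .of_bound (hB.aestronglyMeasurable_qH n s) _ (hB.ae_abs_qH_le hq0 hq1 hs n)

theorem integrable_qH_mul_qH (hB : IsQBrownian μ ℱ q B) (hq0 : 0 ≤ q) (hq1 : q < 1)
    {s u : ℝ} (hs : 0 ≤ s) (hu : 0 ≤ u) (m n : ℕ) :
    Integrable (fun ω => qH q m (B s ω) s * qH q n (B u ω) u) μ :=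
  (hB.integrable_qH hq0 hq1 hu n).bdd_mul (hB.aestronglyMeasurable_qH m s)
    (hB.ae_abs_qH_le hq0 hq1 hs m)

theorem integral_qH_mul_qH_of_le (hB : IsQBrownian μ ℱ q B) (hq0 : 0 ≤ q) (hq1 : q < 1)
    {s u : ℝ} (hs : 0 < s) (hsu : s ≤ u) (m n : ℕ) :
    ∫ ω, qH q m (B s ω) s * qH q n (B u ω) u ∂μ = if m = n then qFact q n * s ^ n else 0 := by
  rw [← integral_mul_condExp_of_stronglyMeasurable_left (ℱ.le s) (hB.stronglyMeasurable_qH m s)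
    (hB.integrable_qH_mul_qH hq0 hq1 hs.le (hs.le.trans hsu) m n)
    (hB.integrable_qH hq0 hq1 (hs.le.trans hsu) n), ← hB.integral_qH_mul_qH s hs m n]
  refine integral_congr_ae ?_
  filter_upwards [hB.condExp_qH n s u hs.le hsu] with ω h
  rw [h, mul_comm]

theorem integral_qH_mul_qH_min (hB : IsQBrownian μ ℱ q B) (hq0 : 0 ≤ q) (hq1 : q < 1)
    {s u : ℝ} (hs : 0 < s) (hu : 0 < u) (m n : ℕ) :
    ∫ ω, qH q m (B s ω) s * qH q n (B u ω) u ∂μ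
      = if m = n then qFact q n * min s u ^ n else 0 := by
  rcases le_total s u with h | h
  · rw [min_eq_left h, hB.integral_qH_mul_qH_of_le hq0 hq1 hs h]
  · simp_rw [mul_comm (qH q m _ _), min_eq_right h, hB.integral_qH_mul_qH_of_le hq0 hq1 hu h,
      eq_comm (a := n)]
    split_ifs with hmn
    · rw [hmn]
    · rfl

end IsQBrownian

section GeometricGrid

variable {q t : ℝ}

theorem pow_mul_le_pow_mul_of_le (hq0 : 0 ≤ q) (hq1 : q ≤ 1) (ht : 0 ≤ t) {i j : ℕ}
    (h : i ≤ j) : q ^ j * t ≤ q ^ i * t :=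
  mul_le_mul_of_nonneg_right (pow_le_pow_of_le_one hq0 hq1 h) ht

theorem min_pow_mul_pow_mul (hq0 : 0 ≤ q) (hq1 : q ≤ 1) (ht : 0 ≤ t) (i j : ℕ) :
    min (q ^ i * t) (q ^ j * t) = q ^ max i j * t := by
  rcases le_total i j with h | h
  · rw [max_eq_right h, min_eq_right (pow_mul_le_pow_mul_of_le hq0 hq1 ht h)]
  · rw [max_eq_left h, min_eq_left (pow_mul_le_pow_mul_of_le hq0 hq1 ht h)]

theorem sqrt_pow_mul_pow_succ_le (hq0 : 0 ≤ q) (hq1 : q ≤ 1) (k p : ℕ) :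
    Real.sqrt (q ^ k * t) ^ (p + 1) ≤ Real.sqrt q ^ k * Real.sqrt t ^ (p + 1) := by
  have hsqrt : Real.sqrt (q ^ k) = Real.sqrt q ^ k := by
    rw [Real.sqrt_eq_iff_eq_sq (by positivity) (by positivity), ← pow_mul, mul_comm, pow_mul,
      Real.sq_sqrt hq0]
  rw [Real.sqrt_mul (pow_nonneg hq0 k), hsqrt, mul_pow]
  gcongr
  exact pow_le_of_le_one (by positivity) (pow_le_one₀ (Real.sqrt_nonneg q)
    (Real.sqrt_le_one.2 hq1)) p.succ_ne_zero

end GeometricGrid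

noncomputable def qIncrement {Ω : Type*} (q t : ℝ) (B : ℝ → Ω → ℝ) (b : ℕ → ℝ → ℝ) (m k : ℕ)
    (ω : Ω) : ℝ :=
  b m (q ^ k * t) * (qH q (m + 1) (B (q ^ k * t) ω) (q ^ k * t) -
    qH q (m + 1) (B (q ^ (k + 1) * t) ω) (q ^ (k + 1) * t))

noncomputable def qStochasticIntegral {Ω : Type*} (q t : ℝ) (B : ℝ → Ω → ℝ) (b : ℕ → ℝ → ℝ)
    (m : ℕ) (ω : Ω) : ℝ :=
  ∑' k, qIncrement q t B b m k ω

noncomputable def qIncrementVariance (q t : ℝ) (b : ℕ → ℝ → ℝ) (m k : ℕ) : ℝ :=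
  b m (q ^ k * t) ^ 2 * qFact q (m + 1) * ((q ^ k * t) ^ (m + 1) - (q ^ (k + 1) * t) ^ (m + 1))

section IncrementVariance

variable {q t : ℝ}

theorem qIncrementVariance_nonneg (hq0 : 0 ≤ q) (hq1 : q ≤ 1) (ht : 0 ≤ t) (b : ℕ → ℝ → ℝ)
    (m k : ℕ) : 0 ≤ qIncrementVariance q t b m k := by
  have hdiff : 0 ≤ (q ^ k * t) ^ (m + 1) - (q ^ (k + 1) * t) ^ (m + 1) :=
    sub_nonneg.2 <| pow_le_pow_left₀ (by positivity)
      (pow_mul_le_pow_mul_of_le hq0 hq1 ht k.le_succ) _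
  have := qFact_pos hq0 (m + 1)
  unfold qIncrementVariance
  positivity

/-- The right-hand side is the `k`-th term of `(1/[m]_q!) ∫_0^t b_m(s)² s^m d_q s`. -/
theorem qIncrementVariance_div_qFact_sq (hq0 : 0 ≤ q) (b : ℕ → ℝ → ℝ) (m k : ℕ) :
    (1 / qFact q (m + 1)) ^ 2 * qIncrementVariance q t b m k
      = 1 / qFact q m * ((1 - q) * t * (q ^ k * b m (q ^ k * t) ^ 2 * (q ^ k * t) ^ m)) := by
  have hF := (qFact_pos hq0 m).ne'
  have hN := (qNat_succ_pos hq0 m).ne'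
  have hdiff : (q ^ k * t) ^ (m + 1) - (q ^ (k + 1) * t) ^ (m + 1)
      = (q ^ k * t) ^ (m + 1) * ((1 - q) * qNat q (m + 1)) := by
    rw [one_sub_mul_qNat]; ring
  rw [qIncrementVariance, hdiff, qFact_succ]
  field_simp
  ring

end IncrementVariance

namespace IsQBrownian

variable {Ω : Type*} [m0 : MeasurableSpace Ω] {μ : Measure Ω} {ℱ : Filtration ℝ m0} {q t : ℝ}
  {B : ℝ → Ω → ℝ}

theorem aestronglyMeasurable_qIncrement (hB : IsQBrownian μ ℱ q B) (b : ℕ → ℝ → ℝ) (m k : ℕ) :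
    AEStronglyMeasurable (qIncrement q t B b m k) μ :=
  ((hB.aestronglyMeasurable_qH _ _).sub (hB.aestronglyMeasurable_qH _ _)).const_mul _

theorem ae_abs_qIncrement_le (hB : IsQBrownian μ ℱ q B) (hq0 : 0 ≤ q) (hq1 : q < 1)
    (ht : 0 ≤ t) (b : ℕ → ℝ → ℝ) (m k : ℕ) :
    ∀ᵐ ω ∂μ, |qIncrement q t B b m k ω| ≤ |b m (q ^ k * t)| *
      (qHBound q (m + 1) * Real.sqrt (q ^ k * t) ^ (m + 1)
        + qHBound q (m + 1) * Real.sqrt (q ^ (k + 1) * t) ^ (m + 1)) := by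
  filter_upwards [hB.ae_abs_qH_le hq0 hq1 (by positivity : 0 ≤ q ^ k * t) (m + 1),
    hB.ae_abs_qH_le hq0 hq1 (by positivity : 0 ≤ q ^ (k + 1) * t) (m + 1)] with ω h1 h2
  rw [qIncrement, abs_mul]
  gcongr
  exact (abs_sub _ _).trans (add_le_add h1 h2)

theorem ae_abs_qIncrement_le_geometric (hB : IsQBrownian μ ℱ q B) (hq0 : 0 ≤ q) (hq1 : q < 1)
    (ht : 0 ≤ t) {b : ℕ → ℝ → ℝ} {m : ℕ} {M : ℝ} (hM : ∀ s ∈ Set.Icc 0 t, |b m s| ≤ M) :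
    ∀ᵐ ω ∂μ, ∀ k, |qIncrement q t B b m k ω|
      ≤ 2 * M * qHBound q (m + 1) * Real.sqrt t ^ (m + 1) * Real.sqrt q ^ k := by
  rw [ae_all_iff]
  intro k
  filter_upwards [hB.ae_abs_qIncrement_le hq0 hq1 ht b m k] with ω h
  have hc := (qHBound_pos hq1 (m + 1)).le
  have hb : |b m (q ^ k * t)| ≤ M :=
    hM _ ⟨by positivity, mul_le_of_le_one_left ht (pow_le_one₀ hq0 hq1.le)⟩
  have h1 := sqrt_pow_mul_pow_succ_le (t := t) hq0 hq1.le k m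
  have h2 : Real.sqrt (q ^ (k + 1) * t) ^ (m + 1) ≤ Real.sqrt q ^ k * Real.sqrt t ^ (m + 1) :=
    (sqrt_pow_mul_pow_succ_le hq0 hq1.le (k + 1) m).trans <| mul_le_mul_of_nonneg_right
      (pow_le_pow_of_le_one (Real.sqrt_nonneg q) (Real.sqrt_le_one.2 hq1.le) k.le_succ)
      (by positivity)
  refine h.trans ?_
  calc _ ≤ M * (qHBound q (m + 1) * (Real.sqrt q ^ k * Real.sqrt t ^ (m + 1))
        + qHBound q (m + 1) * (Real.sqrt q ^ k * Real.sqrt t ^ (m + 1))) := by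
        gcongr
        exact (abs_nonneg _).trans hb
    _ = _ := by ring

variable [IsFiniteMeasure μ]

theorem integrable_qIncrement_mul (hB : IsQBrownian μ ℱ q B) (hq0 : 0 ≤ q) (hq1 : q < 1)
    (ht : 0 ≤ t) (b : ℕ → ℝ → ℝ) (m n k j : ℕ) :
    Integrable (fun ω => qIncrement q t B b m k ω * qIncrement q t B b n j ω) μ :=
  (Integrable.of_bound (hB.aestronglyMeasurable_qIncrement b n j) _
    (hB.ae_abs_qIncrement_le hq0 hq1 ht b n j)).bdd_mul
    (hB.aestronglyMeasurable_qIncrement b m k) (hB.ae_abs_qIncrement_le hq0 hq1 ht b m k)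

theorem integral_qIncrement_mul (hB : IsQBrownian μ ℱ q B) (hq0 : 0 < q) (hq1 : q < 1)
    (ht : 0 < t) (b : ℕ → ℝ → ℝ) (m n k j : ℕ) :
    ∫ ω, qIncrement q t B b m k ω * qIncrement q t B b n j ω ∂μ
      = if m = n ∧ k = j then qIncrementVariance q t b m k else 0 := by
  have hX : ∀ i l, ∫ ω, qH q (m + 1) (B (q ^ i * t) ω) (q ^ i * t) *
      qH q (n + 1) (B (q ^ l * t) ω) (q ^ l * t) ∂μ
      = if m = n then qFact q (m + 1) * (q ^ max i l * t) ^ (m + 1) else 0 := fun i l => by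
    rw [hB.integral_qH_mul_qH_min hq0.le hq1 (by positivity) (by positivity),
      min_pow_mul_pow_mul hq0.le hq1.le ht.le]
    rcases eq_or_ne m n with rfl | hmn
    · simp
    · simp [hmn]
  have hint : ∀ i l, Integrable (fun ω => qH q (m + 1) (B (q ^ i * t) ω) (q ^ i * t) *
      qH q (n + 1) (B (q ^ l * t) ω) (q ^ l * t)) μ := fun i l =>
    hB.integrable_qH_mul_qH hq0.le hq1 (by positivity) (by positivity) _ _
  simp_rw [qIncrement, mul_mul_mul_comm (b m _), integral_const_mul]
  rw [integral_sub_mul_sub (hint _ _) (hint _ _) (hint _ _) (hint _ _), hX, hX, hX, hX]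
  rcases eq_or_ne m n with rfl | hmn
  · rcases lt_trichotomy k j with h | rfl | h
    · simp only [if_true, true_and, if_neg h.ne, max_eq_right h.le, max_eq_right h.nat_succ_le,
        max_eq_right (h.le.trans (Nat.le_add_right j 1)),
        max_eq_right (Nat.add_le_add_right h.le 1)]
      ring
    · simp only [and_self, if_true, max_self, max_eq_right (Nat.le_add_right k 1),
        max_eq_left (Nat.le_add_right k 1), qIncrementVariance]
      ring
    · simp only [if_true, true_and, if_neg h.ne', max_eq_left h.le, max_eq_left h.nat_succ_le,
        max_eq_left (h.le.trans (Nat.le_add_right k 1)),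
        max_eq_left (Nat.add_le_add_right h.le 1)]
      ring
  · simp [hmn]

theorem integral_sum_qIncrement_mul_sum (hB : IsQBrownian μ ℱ q B) (hq0 : 0 < q) (hq1 : q < 1)
    (ht : 0 < t) (b : ℕ → ℝ → ℝ) (m n N : ℕ) :
    ∫ ω, (∑ k ∈ Finset.range N, qIncrement q t B b m k ω) *
        ∑ k ∈ Finset.range N, qIncrement q t B b n k ω ∂μ
      = if m = n then ∑ k ∈ Finset.range N, qIncrementVariance q t b m k else 0 := by
  have hint := hB.integrable_qIncrement_mul hq0.le hq1 ht.le b m n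
  simp_rw [Finset.sum_mul_sum]
  rw [integral_finsetSum _ fun k _ => integrable_finsetSum _ fun j _ => hint k j]
  simp_rw [integral_finsetSum _ fun j _ => hint _ j,
    hB.integral_qIncrement_mul hq0 hq1 ht b m n]
  split_ifs with hmn <;> simp +contextual [hmn]

theorem integral_qStochasticIntegral_mul (hB : IsQBrownian μ ℱ q B) (hq0 : 0 < q) (hq1 : q < 1)
    (ht : 0 < t) {b : ℕ → ℝ → ℝ} {m n : ℕ} {M M' : ℝ} (hM : ∀ s ∈ Set.Icc 0 t, |b m s| ≤ M)
    (hM' : ∀ s ∈ Set.Icc 0 t, |b n s| ≤ M') :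
    ∫ ω, qStochasticIntegral q t B b m ω * qStochasticIntegral q t B b n ω ∂μ
      = if m = n then ∑' k, qIncrementVariance q t b m k else 0 := by
  have hlim := tendsto_integral_sum_range_mul_sum_range (hB.aestronglyMeasurable_qIncrement b m)
    (hB.aestronglyMeasurable_qIncrement b n) (Real.sqrt_nonneg q)
    ((Real.sqrt_lt' one_pos).2 (by rwa [one_pow]))
    (hB.ae_abs_qIncrement_le_geometric hq0.le hq1 ht.le hM)
    (hB.ae_abs_qIncrement_le_geometric hq0.le hq1 ht.le hM')
  simp_rw [hB.integral_sum_qIncrement_mul_sum hq0 hq1 ht] at hlim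
  split_ifs at hlim ⊢ with hmn
  · subst hmn
    exact ((hasSum_iff_tendsto_nat_of_nonneg
      (qIncrementVariance_nonneg hq0.le hq1.le ht.le b m) _).2 hlim).tsum_eq.symm
  · exact tendsto_nhds_unique hlim tendsto_const_nhds

theorem integral_sq_qStochasticIntegral_div_qFact (hB : IsQBrownian μ ℱ q B) (hq0 : 0 < q)
    (hq1 : q < 1) (ht : 0 < t) {b : ℕ → ℝ → ℝ} {m : ℕ} {M : ℝ}
    (hM : ∀ s ∈ Set.Icc 0 t, |b m s| ≤ M) :
    ∫ ω, (1 / qFact q (m + 1) * qStochasticIntegral q t B b m ω) ^ 2 ∂μ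
      = 1 / qFact q m * ((1 - q) * t * ∑' k, q ^ k * b m (q ^ k * t) ^ 2 * (q ^ k * t) ^ m) := by
  simp_rw [mul_pow (1 / qFact q (m + 1)), integral_const_mul,
    sq (qStochasticIntegral _ _ _ _ _ _), hB.integral_qStochasticIntegral_mul hq0 hq1 ht hM hM,
    if_pos, ← tsum_mul_left, qIncrementVariance_div_qFact_sq hq0.le]

end IsQBrownian

theorem q_stochastic_integral_L2_extension_general
    {Ω : Type*} [m0 : MeasurableSpace Ω] (μ : Measure Ω) [IsProbabilityMeasure μ]
    (ℱ : Filtration ℝ m0) (q t : ℝ) (hq0 : 0 < q) (hq1 : q < 1) (ht : 0 < t)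
    (B : ℝ → Ω → ℝ) (hadp : Adapted ℱ B)
    (hbdd : ∀ s : ℝ, 0 ≤ s → ∀ᵐ ω ∂μ, |B s ω| ≤ 2 * Real.sqrt s / Real.sqrt (1 - q))
    (hmart : ∀ (n : ℕ) (s u : ℝ), 0 ≤ s → s ≤ u →
      μ[fun ω => qH q n (B u ω) u | ℱ s] =ᵐ[μ] fun ω => qH q n (B s ω) s)
    (horth : ∀ s : ℝ, 0 < s → ∀ m n : ℕ,
      ∫ ω, qH q n (B s ω) s * qH q m (B s ω) s ∂μ =
        if m = n then qFact q n * s ^ n else 0)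
    (b : ℕ → ℝ → ℝ)
    (hb : ∀ n : ℕ, ∃ M : ℝ, ∀ s ∈ Set.Icc (0 : ℝ) t, |b n s| ≤ M)
    (hsum : Summable (fun n : ℕ => (1 / qFact q n) *
      ((1 - q) * t * ∑' k : ℕ, q ^ k * (b n (q ^ k * t)) ^ 2 * (q ^ k * t) ^ n))) :
    ∃ J : ℕ → Ω → ℝ,
      (∀ m : ℕ,
        (∀ᵐ ω ∂μ, Tendsto
          (fun N : ℕ => ∑ k ∈ Finset.range N, b m (q ^ k * t) *
            (qH q (m + 1) (B (q ^ k * t) ω) (q ^ k * t) -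
             qH q (m + 1) (B (q ^ (k + 1) * t) ω) (q ^ (k + 1) * t)))
          atTop (nhds (J m ω))) ∧
        Tendsto (fun N : ℕ => ∫ ω,
            (∑ k ∈ Finset.range N, b m (q ^ k * t) *
              (qH q (m + 1) (B (q ^ k * t) ω) (q ^ k * t) -
               qH q (m + 1) (B (q ^ (k + 1) * t) ω) (q ^ (k + 1) * t)) - J m ω) ^ 2 ∂μ)
          atTop (nhds 0)) ∧
      ∃ S : Ω → ℝ,
        Tendsto (fun N : ℕ => ∫ ω,
            (∑ m ∈ Finset.range (N + 1), (1 / qFact q (m + 1)) * J m ω - S ω) ^ 2 ∂μ)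
          atTop (nhds 0) := by
  have hB : IsQBrownian μ ℱ q B := ⟨hadp, hbdd, hmart, horth⟩
  choose M hM using hb
  have hr0 : 0 ≤ Real.sqrt q := Real.sqrt_nonneg q
  have hr1 : Real.sqrt q < 1 := (Real.sqrt_lt' one_pos).2 (by rwa [one_pow])
  have hmeas m := hB.aestronglyMeasurable_qIncrement (t := t) b m
  have hgeom m := hB.ae_abs_qIncrement_le_geometric hq0.le hq1 ht.le (hM m)
  refine ⟨qStochasticIntegral q t B b, fun m =>
    ⟨ae_tendsto_sum_range_tsum_of_abs_le_geometric hr0 hr1 (hgeom m),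
      tendsto_integral_sq_sum_range_sub_tsum (hmeas m) hr0 hr1 (hgeom m)⟩, ?_⟩
  obtain ⟨S, hS⟩ := exists_tendsto_integral_sq_sum_sub_of_orthogonal
    (f := fun m ω => 1 / qFact q (m + 1) * qStochasticIntegral q t B b m ω)
    (fun m => (memLp_tsum_of_abs_le_geometric (hmeas m) hr0 hr1 (hgeom m) 2).const_mul _)
    (fun m n hmn => by
      beta_reduce
      simp_rw [mul_mul_mul_comm _ (qStochasticIntegral q t B b m _), integral_const_mul]
      rw [hB.integral_qStochasticIntegral_mul hq0 hq1 ht (hM m) (hM n), if_neg hmn, mul_zero])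
    (hsum.congr fun m => (hB.integral_sq_qStochasticIntegral_div_qFact hq0 hq1 ht (hM m)).symm)
  exact ⟨S, hS.comp (tendsto_add_atTop_nat 1)⟩

/-- if the coefficients `b_n` are bounded on `[0,t]` and
`∑_n (1/[n]_q!) ∫_0^t b_n(s)² s^n d_q s < ∞`, then the partial stochastic integrals
`S_N = ∑_{m≤N} (1/[m+1]_q!) ∑_k b_m(q^k t)(h_{m+1}(B_{q^k t};q^k t) − h_{m+1}(B_{q^{k+1}t};q^{k+1}t))`
are well defined (inner series converge a.s. and in `L²`) and `(S_N)` converges in `L²(P)`. -/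
theorem q_stochastic_integral_L2_extension
    {Ω : Type*} [m0 : MeasurableSpace Ω] (μ : Measure Ω) [IsProbabilityMeasure μ]
    (ℱ : Filtration ℝ m0) (q t : ℝ) (hq0 : 0 < q) (hq1 : q < 1) (ht : 0 < t)
    (B : ℝ → Ω → ℝ) (hadp : Adapted ℱ B) (hB0 : ∀ ω, B 0 ω = 0)
    (hbdd : ∀ s : ℝ, 0 ≤ s → ∀ᵐ ω ∂μ, |B s ω| ≤ 2 * Real.sqrt s / Real.sqrt (1 - q))
    (hmart : ∀ (n : ℕ) (s u : ℝ), 0 ≤ s → s ≤ u →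
      μ[fun ω => qH q n (B u ω) u | ℱ s] =ᵐ[μ] fun ω => qH q n (B s ω) s)
    (horth : ∀ s : ℝ, 0 < s → ∀ m n : ℕ,
      ∫ ω, qH q n (B s ω) s * qH q m (B s ω) s ∂μ =
        if m = n then qFact q n * s ^ n else 0)
    (b : ℕ → ℝ → ℝ)
    (hb : ∀ n : ℕ, ∃ M : ℝ, ∀ s ∈ Set.Icc (0 : ℝ) t, |b n s| ≤ M)
    (hsum : Summable (fun n : ℕ => (1 / qFact q n) *
      ((1 - q) * t * ∑' k : ℕ, q ^ k * (b n (q ^ k * t)) ^ 2 * (q ^ k * t) ^ n))) :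
    ∃ J : ℕ → Ω → ℝ,
      (∀ m : ℕ,
        (∀ᵐ ω ∂μ, Tendsto
          (fun N : ℕ => ∑ k ∈ Finset.range N, b m (q ^ k * t) *
            (qH q (m + 1) (B (q ^ k * t) ω) (q ^ k * t) -
             qH q (m + 1) (B (q ^ (k + 1) * t) ω) (q ^ (k + 1) * t)))
          atTop (nhds (J m ω))) ∧
        Tendsto (fun N : ℕ => ∫ ω,
            (∑ k ∈ Finset.range N, b m (q ^ k * t) *
              (qH q (m + 1) (B (q ^ k * t) ω) (q ^ k * t) -
               qH q (m + 1) (B (q ^ (k + 1) * t) ω) (q ^ (k + 1) * t)) - J m ω) ^ 2 ∂μ)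
          atTop (nhds 0)) ∧
      ∃ S : Ω → ℝ,
        Tendsto (fun N : ℕ => ∫ ω,
            (∑ m ∈ Finset.range (N + 1), (1 / qFact q (m + 1)) * J m ω - S ω) ^ 2 ∂μ)
          atTop (nhds 0) :=
  q_stochastic_integral_L2_extension_general (m0 := m0) μ ℱ q t hq0 hq1 ht B hadp hbdd hmart horth b
    hb hsum
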